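/- arXiv:2305.02771 — 2 statements merged into one kernel-verified Lean document; each statement's English description precedes it below -/
import Mathlib

section
/- Let (X, D) be a locally compact, complete metric space, α > 1, and Ω ⊆ X an open set with D_α(Ω) ≠ ∅. Let (d_n)_{n∈ℕ} ⊆ D_α(Ω) and d ∈ D_α(Ω). Suppose the functionals F_{d_n} Γ-converge to F_d on Lip(Ω) with the topology of uniform convergence on compact subsets of Ω, i.e.: (liminf) for every sequence (u_n) ⊆ Lip(Ω) converging to u ∈ Lip(Ω) uniformly on compact sets one has F_d(u) ≤ liminf_n F_{d_n}(u_n); (limsup) for every u ∈ Lip(Ω) there exists (u_n) ⊆ Lip(Ω) converging to u uniformly on compact sets with limsup_n F_{d_n}(u_n) ≤ F_d(u). Then d_n → d uniformly on compact subsets of Ω × Ω. -/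
open Filter MeasureTheory Set
open scoped ENNReal Topology

/-- Length of the curve `γ` on the interval `[a, b]`, with respect to the
(candidate) distance `d`, defined as a supremum over finite partitions. -/
noncomputable def pathLengthOn {E : Type*} (d : E → E → ℝ) (γ : ℝ → E) (a b : ℝ) : ℝ≥0∞ :=
  ⨆ (k : ℕ) (t : Fin (k + 1) → ℝ) (_ : Monotone t) (_ : t 0 = a) (_ : t (Fin.last k) = b),
    ∑ i : Fin k, ENNReal.ofReal (d (γ (t i.succ)) (γ (t i.castSucc)))

/-- Length of the curve `γ : [0,1] → E` with respect to `d`. -/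
noncomputable def pathLength {E : Type*} (d : E → E → ℝ) (γ : ℝ → E) : ℝ≥0∞ :=
  pathLengthOn d γ 0 1

/-- `d` is a distance on `E`. -/
def IsDistance {E : Type*} (d : E → E → ℝ) : Prop :=
  (∀ x y, d x y = d y x) ∧ (∀ x y z, d x z ≤ d x y + d y z) ∧ ∀ x y, d x y = 0 ↔ x = y

/-- `γ : [0,1] → E` is a Lipschitz curve with respect to `d`. -/
def LipCurve {E : Type*} (d : E → E → ℝ) (γ : ℝ → E) : Prop :=
  ∃ K : ℝ, ∀ s ∈ Icc (0 : ℝ) 1, ∀ t ∈ Icc (0 : ℝ) 1, d (γ s) (γ t) ≤ K * |s - t|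

/-- `(E, d)` is a length space: `d x y` is the infimum of lengths of Lipschitz
curves `γ : [0,1] → E` joining `x` to `y`. -/
def IsLengthDist {E : Type*} (d : E → E → ℝ) : Prop :=
  ∀ x y : E, ENNReal.ofReal (d x y) =
    ⨅ (γ : ℝ → E) (_ : LipCurve d γ) (_ : γ 0 = x) (_ : γ 1 = y), pathLength d γ

/-- `d ∈ 𝒟_α(Ω)` : `d` is a distance on `Ω` making it a length space and satisfying
`α⁻¹ D ≤ d ≤ α D`. -/
def MemD {X : Type*} [MetricSpace X] (α : ℝ) (Ω : Set X) (d : Ω → Ω → ℝ) : Prop :=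
  IsDistance d ∧ IsLengthDist d ∧
    ∀ x y : Ω, α⁻¹ * dist (x : X) (y : X) ≤ d x y ∧ d x y ≤ α * dist (x : X) (y : X)

/-- Uniform convergence `dn → d` on compact subsets of `E × E`. -/
def TendstoUnifCompactly {E : Type*} [TopologicalSpace E]
    (dn : ℕ → E → E → ℝ) (d : E → E → ℝ) : Prop :=
  ∀ K : Set (E × E), IsCompact K → ∀ ε : ℝ, 0 < ε →
    ∃ N : ℕ, ∀ n ≥ N, ∀ p ∈ K, |dn n p.1 p.2 - d p.1 p.2| < ε

/-- `e` is a continuous extension of `d : Ω → Ω → ℝ` to the closure of `Ω`. -/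
def IsContExt {X : Type*} [MetricSpace X] (Ω : Set X) (d : Ω → Ω → ℝ)
    (e : closure Ω → closure Ω → ℝ) : Prop :=
  Continuous (fun p : closure Ω × closure Ω => e p.1 p.2) ∧
    ∀ x y : Ω, e ⟨x, subset_closure x.2⟩ ⟨y, subset_closure y.2⟩ = d x y

/-- `(E, d)` is a geodesic space: any two points are joined by a constant-speed curve
`γ : [0,1] → E` whose length on each subinterval `[t,s]` equals `d (γ t) (γ s)`. -/
def IsGeodesicDist {E : Type*} (d : E → E → ℝ) : Prop :=
  ∀ x y : E, ∃ γ : ℝ → E, γ 0 = x ∧ γ 1 = y ∧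
    (∀ t s : ℝ, 0 ≤ t → t ≤ s → s ≤ 1 →
      pathLengthOn d γ t s = pathLength d γ * ENNReal.ofReal (s - t)) ∧
    ∀ t s : ℝ, 0 ≤ t → t ≤ s → s ≤ 1 →
      pathLengthOn d γ t s = ENNReal.ofReal (d (γ t) (γ s))

/-- Uniform convergence on `[0,1]` of a sequence of curves. -/
def UnifConvCurves {E : Type*} [MetricSpace E] (γn : ℕ → ℝ → E) (γ : ℝ → E) : Prop :=
  ∀ ε : ℝ, 0 < ε → ∃ N : ℕ, ∀ n ≥ N, ∀ t ∈ Icc (0 : ℝ) 1, dist (γn n t) (γ t) < ε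

/-- Γ-convergence of the length functionals `L_{dn}` to `L_d` on the space of
Lipschitz curves `[0,1] → E` with the topology of uniform convergence. -/
def GammaConvLengths {E : Type*} [MetricSpace E] (dn : ℕ → E → E → ℝ) (d : E → E → ℝ) : Prop :=
  (∀ (γn : ℕ → ℝ → E) (γ : ℝ → E),
      (∀ n, LipCurve (fun x y : E => dist x y) (γn n)) →
      LipCurve (fun x y : E => dist x y) γ → UnifConvCurves γn γ →
      pathLength d γ ≤ liminf (fun n => pathLength (dn n) (γn n)) atTop) ∧
  ∀ γ : ℝ → E, LipCurve (fun x y : E => dist x y) γ →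
    ∃ γn : ℕ → ℝ → E, (∀ n, LipCurve (fun x y : E => dist x y) (γn n)) ∧
      UnifConvCurves γn γ ∧
      limsup (fun n => pathLength (dn n) (γn n)) atTop ≤ pathLength d γ

/-- The functional `F_d`: `0` on `1`-Lipschitz functions (w.r.t. `d`), `+∞` otherwise. -/
noncomputable def Ffun {E : Type*} (d : E → E → ℝ) (u : E → ℝ) : ℝ≥0∞ := by
  classical exact if ∀ x y : E, |u x - u y| ≤ d x y then 0 else ⊤

/-- Uniform convergence on compact subsets of `E` for real-valued functions. -/
def UnifConvCompactsFun {E : Type*} [TopologicalSpace E] (un : ℕ → E → ℝ) (u : E → ℝ) : Prop :=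
  ∀ K : Set E, IsCompact K → ∀ ε : ℝ, 0 < ε →
    ∃ N : ℕ, ∀ n ≥ N, ∀ x ∈ K, |un n x - u x| < ε

/-- `u` is a real-valued Lipschitz function on the metric space `E`. -/
def IsLipFun {E : Type*} [MetricSpace E] (u : E → ℝ) : Prop :=
  ∃ K : NNReal, LipschitzWith K u

/-! The inequality `lim inf dₙ ≥ d` comes from the recovery sequences of the `1`-Lipschitz
functions `d x ·`. For `lim sup dₙ ≤ d` it suffices, since `d` is a length distance, to treat
nearby points: split a nearly minimizing curve of `d` into short pieces and use the triangle
inequality for `dₙ`. For nearby `x, y`, if `dₙ x y ≥ c > d x y` along a subsequence, the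
truncations `min (dₙ x ·) c` are equi-Lipschitz and equal to `c` off a compact ball, so by
Arzelà–Ascoli a further subsequence converges; the Γ-liminf inequality makes the limit
`1`-Lipschitz for `d`, although it vanishes at `x` and equals `c` at `y`. Finally, pointwise
convergence of equi-Lipschitz functions is uniform on compact sets. -/

open Metric
open scoped NNReal BoundedContinuousFunction

section Distance

variable {E : Type*} {d : E → E → ℝ}

lemma IsDistance.self_eq_zero (hd : IsDistance d) (x : E) : d x x = 0 := (hd.2.2 x x).2 rfl

lemma IsDistance.nonneg (hd : IsDistance d) (x y : E) : 0 ≤ d x y := by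
  have := hd.2.1 x y x
  rw [hd.self_eq_zero, hd.1 y x] at this
  linarith

lemma IsDistance.abs_sub_le (hd : IsDistance d) (x z w : E) : |d x z - d x w| ≤ d z w := by
  rw [abs_sub_le_iff]
  constructor
  · linarith [hd.2.1 x w z, hd.1 w z]
  · linarith [hd.2.1 x z w]

lemma IsDistance.le_range_sum (hd : IsDistance d) (z : ℕ → E) (k : ℕ) :
    d (z 0) (z k) ≤ ∑ i ∈ Finset.range k, d (z (i + 1)) (z i) := by
  induction k with
  | zero => simp [hd.self_eq_zero]
  | succ k ih =>
    rw [Finset.sum_range_succ]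
    linarith [hd.2.1 (z 0) (z k) (z (k + 1)), hd.1 (z k) (z (k + 1))]

end Distance

def IsComparableDist {E : Type*} [MetricSpace E] (α : ℝ) (d : E → E → ℝ) : Prop :=
  IsDistance d ∧ ∀ x y, α⁻¹ * dist x y ≤ d x y ∧ d x y ≤ α * dist x y

namespace IsComparableDist

variable {E : Type*} [MetricSpace E] {α : ℝ} {d : E → E → ℝ}

lemma dist_le (hd : IsComparableDist α d) (hα : 0 < α) (x y : E) : dist x y ≤ α * d x y :=
  (inv_mul_le_iff₀ hα).1 (hd.2 x y).1

lemma lipschitzWith (hd : IsComparableDist α d) (x : E) : LipschitzWith α.toNNReal (d x) :=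
  LipschitzWith.of_dist_le_mul fun z w => by
    rw [Real.dist_eq]
    exact (hd.1.abs_sub_le x z w).trans
      ((hd.2 z w).2.trans (mul_le_mul_of_nonneg_right (Real.le_coe_toNNReal α) dist_nonneg))

lemma lipschitzWith_uncurry (hd : IsComparableDist α d) :
    LipschitzWith (α.toNNReal + α.toNNReal) (Function.uncurry d) := by
  refine LipschitzWith.uncurry (fun y => ?_) hd.lipschitzWith
  convert hd.lipschitzWith y using 1
  exact funext fun x => hd.1.1 x y

lemma continuousOn_of_lipCurve (hd : IsComparableDist α d) (hα : 0 < α) {γ : ℝ → E}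
    (hγ : LipCurve d γ) : ContinuousOn γ (Icc 0 1) := by
  obtain ⟨K, hK⟩ := hγ
  refine (LipschitzOnWith.of_dist_le_mul (K := (α * K).toNNReal) fun s hs t ht => ?_).continuousOn
  calc dist (γ s) (γ t) ≤ α * d (γ s) (γ t) := hd.dist_le hα _ _
    _ ≤ α * (K * dist s t) := by
        rw [Real.dist_eq]; exact mul_le_mul_of_nonneg_left (hK s hs t ht) hα.le
    _ ≤ (α * K).toNNReal * dist s t := by
        rw [← mul_assoc]
        exact mul_le_mul_of_nonneg_right (Real.le_coe_toNNReal _) dist_nonneg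

end IsComparableDist

lemma Ffun_eq_zero_iff {E : Type*} {d : E → E → ℝ} {u : E → ℝ} :
    Ffun d u = 0 ↔ ∀ x y, |u x - u y| ≤ d x y := by
  unfold Ffun
  split_ifs with h <;> simp [h]

lemma Ffun_lt_top_iff {E : Type*} {d : E → E → ℝ} {u : E → ℝ} :
    Ffun d u < ⊤ ↔ ∀ x y, |u x - u y| ≤ d x y := by
  unfold Ffun
  split_ifs with h <;> simp [h]

lemma sum_le_pathLength {E : Type*} (d : E → E → ℝ) (γ : ℝ → E) {k : ℕ}
    (t : Fin (k + 1) → ℝ) (ht : Monotone t) (h0 : t 0 = 0) (h1 : t (Fin.last k) = 1) :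
    ∑ i : Fin k, ENNReal.ofReal (d (γ (t i.succ)) (γ (t i.castSucc))) ≤ pathLength d γ :=
  le_iSup_of_le k <| le_iSup_of_le t <| le_iSup_of_le ht <| le_iSup_of_le h0 <|
    le_iSup_of_le h1 le_rfl

lemma sum_range_le_pathLength {E : Type*} {d : E → E → ℝ} (hd : ∀ x y, 0 ≤ d x y)
    (γ : ℝ → E) {k : ℕ} (hk : k ≠ 0) :
    ENNReal.ofReal (∑ i ∈ Finset.range k, d (γ ((i + 1 : ℕ) / k)) (γ (i / k))) ≤
      pathLength d γ := by
  rw [ENNReal.ofReal_sum_of_nonneg fun i _ => hd _ _,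
    ← Fin.sum_univ_eq_sum_range (fun i => ENNReal.ofReal (d (γ ((i + 1 : ℕ) / k)) (γ (i / k))))]
  convert sum_le_pathLength d γ (fun i : Fin (k + 1) => (i : ℝ) / k)
    (fun i j hij => div_le_div_of_nonneg_right (by exact_mod_cast hij) (Nat.cast_nonneg k))
    (by simp) (by simp [hk]) using 4 <;> simp

lemma IsLengthDist.exists_lipCurve_lt {E : Type*} {d : E → E → ℝ} (hlen : IsLengthDist d)
    (hd : IsDistance d) (x y : E) {ε : ℝ} (hε : 0 < ε) :
    ∃ γ, LipCurve d γ ∧ γ 0 = x ∧ γ 1 = y ∧ pathLength d γ < ENNReal.ofReal (d x y + ε) := by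
  have hlt : ENNReal.ofReal (d x y) < ENNReal.ofReal (d x y + ε) :=
    (ENNReal.ofReal_lt_ofReal_iff (by linarith [hd.nonneg x y])).2 (by linarith)
  rw [hlen x y] at hlt
  simpa only [iInf_lt_iff, exists_prop] using hlt

lemma IsCompact.exists_pos_forall_isCompact_closedBall {E : Type*} [MetricSpace E]
    [LocallyCompactSpace E] {S : Set E} (hS : IsCompact S) :
    ∃ δ > 0, ∀ z ∈ S, ∀ r ≤ δ, IsCompact (closedBall z r) := by
  obtain ⟨δ, hδ, hcpt⟩ := hS.exists_isCompact_cthickening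
  exact ⟨δ, hδ, fun z hz r hr => hcpt.of_isClosed_subset isClosed_closedBall
    ((closedBall_subset_closedBall hr).trans (closedBall_subset_cthickening hz δ))⟩

lemma lipschitzWith_of_tendsto {E : Type*} [MetricSpace E] {L : ℝ≥0} {f : ℕ → E → ℝ}
    {u : E → ℝ} (hlip : ∀ k, LipschitzWith L (f k))
    (h : ∀ z, Tendsto (fun k => f k z) atTop (𝓝 (u z))) : LipschitzWith L u :=
  LipschitzWith.of_dist_le_mul fun z w =>
    le_of_tendsto ((h z).dist (h w)) (Eventually.of_forall fun k => (hlip k).dist_le_mul z w)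

open scoped Classical in
lemma tendsto_ite_mem_range {β : Type*} [TopologicalSpace β] {m : ℕ → ℕ} (hm : StrictMono m)
    {g : ℕ → β} {b : β} (h : Tendsto (g ∘ m) atTop (𝓝 b)) :
    Tendsto (fun n => if n ∈ range m then g n else b) atTop (𝓝 b) := by
  intro U hU
  obtain ⟨J, hJ⟩ := eventually_atTop.1 (h hU)
  refine eventually_atTop.2 ⟨m J, fun n hn => ?_⟩
  dsimp only
  split_ifs with hmem
  · obtain ⟨j, rfl⟩ := hmem
    exact hJ j (hm.le_iff_le.1 hn)
  · exact mem_of_mem_nhds hU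

lemma exists_subseq_tendsto_of_lipschitzWith {K : Type*} [MetricSpace K] [CompactSpace K]
    {L : ℝ≥0} {a b : ℝ} {f : ℕ → K → ℝ} (hlip : ∀ k, LipschitzWith L (f k))
    (hf : ∀ k z, f k z ∈ Icc a b) :
    ∃ ψ : ℕ → ℕ, StrictMono ψ ∧ ∃ g : K → ℝ, ∀ z, Tendsto (fun j => f (ψ j) z) atTop (𝓝 (g z)) := by
  let F : ℕ → K →ᵇ ℝ := fun k => .mkOfCompact ⟨f k, (hlip k).continuous⟩
  have hcpt : IsCompact (closure (range F)) := by
    refine BoundedContinuousFunction.arzela_ascoli (Icc a b) isCompact_Icc _ ?_ ?_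
    · rintro _ z ⟨k, rfl⟩
      exact hf k z
    · refine (LipschitzWith.uniformEquicontinuous _ L ?_).equicontinuous
      rintro ⟨_, k, rfl⟩
      exact hlip k
  obtain ⟨g, -, ψ, hψ, hlim⟩ := hcpt.tendsto_subseq fun k => subset_closure (mem_range_self k)
  exact ⟨ψ, hψ, g, fun z =>
    (BoundedContinuousFunction.tendsto_iff_tendstoUniformly.1 hlim).tendsto_at z⟩

lemma exists_subseq_tendsto_of_lipschitzWith_of_eqOn_compl {E : Type*} [MetricSpace E]
    {B : Set E} (hB : IsCompact B) {L : ℝ≥0} {a b : ℝ} {f : ℕ → E → ℝ}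
    (hlip : ∀ k, LipschitzWith L (f k)) (hf : ∀ k z, f k z ∈ Icc a b)
    (hcompl : ∀ k, ∀ z ∉ B, f k z = f 0 z) :
    ∃ ψ : ℕ → ℕ, StrictMono ψ ∧ ∃ u : E → ℝ, ∀ z, Tendsto (fun j => f (ψ j) z) atTop (𝓝 (u z)) := by
  have := isCompact_iff_compactSpace.mp hB
  obtain ⟨ψ, hψ, g, hg⟩ := exists_subseq_tendsto_of_lipschitzWith
    (f := fun k => B.domRestrict (f k)) (fun k => (hlip k).restrict B) (fun k z => hf k z)
  classical
  refine ⟨ψ, hψ, fun z => if hz : z ∈ B then g ⟨z, hz⟩ else f 0 z, fun z => ?_⟩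
  by_cases hz : z ∈ B
  · simpa [hz] using hg ⟨z, hz⟩
  · simp [hz, hcompl _ z hz]

section Convergence

variable {E : Type*} [MetricSpace E]

lemma UnifConvCompactsFun.tendsto {un : ℕ → E → ℝ} {u : E → ℝ} (h : UnifConvCompactsFun un u)
    (x : E) : Tendsto (fun n => un n x) atTop (𝓝 (u x)) := by
  refine Metric.tendsto_atTop.2 fun ε hε => ?_
  obtain ⟨N, hN⟩ := h {x} isCompact_singleton ε hε
  exact ⟨N, fun n hn => by simpa [Real.dist_eq] using hN n hn x rfl⟩

lemma unifConvCompactsFun_of_tendsto {L : ℝ≥0} {un : ℕ → E → ℝ} {u : E → ℝ}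
    (hlip : ∀ n, LipschitzWith L (un n)) (h : ∀ x, Tendsto (fun n => un n x) atTop (𝓝 (u x))) :
    UnifConvCompactsFun un u := by
  intro K hK ε hε
  have := isCompact_iff_compactSpace.mp hK
  have hequi : Equicontinuous fun n => K.domRestrict (un n) :=
    (LipschitzWith.uniformEquicontinuous _ L fun n => (hlip n).restrict K).equicontinuous
  have hunif : TendstoUniformlyOn un u atTop K :=
    tendstoUniformlyOn_iff_restrict.2 <| UniformFun.tendsto_iff_tendstoUniformly.1 <|
      (hequi.tendsto_uniformFun_iff_pi _ _).2 (tendsto_pi_nhds.2 fun x => h x)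
  obtain ⟨N, hN⟩ := eventually_atTop.1 (Metric.tendstoUniformlyOn_iff.1 hunif ε hε)
  exact ⟨N, fun n hn x hx => by simpa [Real.dist_eq, abs_sub_comm] using hN n hn x hx⟩

end Convergence

section GammaConvergence

variable {E : Type*} [MetricSpace E] {α : ℝ} {dn : ℕ → E → E → ℝ} {d : E → E → ℝ}

def GammaLiminfIneq (dn : ℕ → E → E → ℝ) (d : E → E → ℝ) : Prop :=
  ∀ (un : ℕ → E → ℝ) (u : E → ℝ), (∀ n, IsLipFun (un n)) → IsLipFun u →
    UnifConvCompactsFun un u → Ffun d u ≤ liminf (fun n => Ffun (dn n) (un n)) atTop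

def GammaLimsupIneq (dn : ℕ → E → E → ℝ) (d : E → E → ℝ) : Prop :=
  ∀ u : E → ℝ, IsLipFun u → ∃ un : ℕ → E → ℝ, (∀ n, IsLipFun (un n)) ∧
    UnifConvCompactsFun un u ∧ limsup (fun n => Ffun (dn n) (un n)) atTop ≤ Ffun d u

lemma eventually_lt_dist_of_gammaLimsup (hd : IsComparableDist α d)
    (hlimsup : GammaLimsupIneq dn d) {x y : E} {c : ℝ} (hc : c < d x y) :
    ∀ᶠ n in atTop, c < dn n x y := by
  obtain ⟨un, -, hconv, hsup⟩ := hlimsup (d x) ⟨_, hd.lipschitzWith x⟩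
  rw [Ffun_eq_zero_iff.2 (hd.1.abs_sub_le x)] at hsup
  have hfin : ∀ᶠ n in atTop, Ffun (dn n) (un n) < ⊤ :=
    eventually_lt_of_limsup_lt (hsup.trans_lt ENNReal.zero_lt_top)
  have hgap : Tendsto (fun n => un n y - un n x) atTop (𝓝 (d x y)) := by
    simpa [hd.1.self_eq_zero] using (hconv.tendsto y).sub (hconv.tendsto x)
  filter_upwards [hfin, hgap.eventually (lt_mem_nhds hc)] with n hn hgapn
  calc c < un n y - un n x := hgapn
    _ ≤ |un n x - un n y| := by rw [abs_sub_comm]; exact le_abs_self _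
    _ ≤ dn n x y := Ffun_lt_top_iff.1 hn x y

lemma GammaLiminfIneq.abs_sub_le_of_tendsto (hliminf : GammaLiminfIneq dn d) {L : ℝ≥0}
    {f : ℕ → E → ℝ} (hlip : ∀ n, LipschitzWith L (f n)) {m : ℕ → ℕ} (hm : StrictMono m)
    (hf : ∀ j z w, |f (m j) z - f (m j) w| ≤ dn (m j) z w) {u : E → ℝ}
    (hu : ∀ z, Tendsto (fun j => f (m j) z) atTop (𝓝 (u z))) (z w : E) :
    |u z - u w| ≤ d z w := by
  classical
  set un : ℕ → E → ℝ := fun n => if n ∈ range m then f n else u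
  have hun : ∀ z, Tendsto (fun n => un n z) atTop (𝓝 (u z)) := fun z => by
    simpa only [un, apply_ite (fun g : E → ℝ => g z)] using
      tendsto_ite_mem_range hm (g := fun n => f n z) (hu z)
  have hu_lip : LipschitzWith L u := lipschitzWith_of_tendsto (fun j => hlip (m j)) hu
  have hun_lip : ∀ n, LipschitzWith L (un n) := fun n => by
    simp only [un]; split_ifs; exacts [hlip n, hu_lip]
  have hF : Ffun d u = 0 := by
    refine nonpos_iff_eq_zero.1 ((hliminf un u (fun n => ⟨_, hun_lip n⟩) ⟨_, hu_lip⟩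
      (unifConvCompactsFun_of_tendsto hun_lip hun)).trans ?_)
    refine liminf_le_of_frequently_le' (frequently_atTop.2 fun N => ⟨m N, hm.le_apply, ?_⟩)
    simp only [un, if_pos (mem_range_self N)]
    exact (Ffun_eq_zero_iff.2 (hf N)).le
  exact Ffun_eq_zero_iff.1 hF z w

lemma eventually_dist_lt_of_gammaLiminf (hα : 0 < α) (hdn : ∀ n, IsComparableDist α (dn n))
    (hliminf : GammaLiminfIneq dn d) {x y : E} {c : ℝ} (hc0 : 0 < c) (hc : d x y < c)
    (hB : IsCompact (closedBall x (α * c))) : ∀ᶠ n in atTop, dn n x y < c := by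
  by_contra hfreq
  simp only [not_eventually, not_lt] at hfreq
  obtain ⟨φ, hφ, hφc⟩ := extraction_of_frequently_atTop hfreq
  set trunc : ℕ → E → ℝ := fun n z => min (dn n x z) c
  have hlip : ∀ n, LipschitzWith α.toNNReal (trunc n) :=
    fun n => ((hdn n).lipschitzWith x).min_const c
  have hout : ∀ n, ∀ z ∉ closedBall x (α * c), trunc n z = c := by
    intro n z hz
    rw [mem_closedBall, not_le, dist_comm, ← lt_inv_mul_iff₀ hα] at hz
    exact min_eq_right (hz.trans_le ((hdn n).2 x z).1).le
  obtain ⟨ψ, hψ, u, hu⟩ := exists_subseq_tendsto_of_lipschitzWith_of_eqOn_compl hB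
    (fun k => hlip (φ k)) (a := 0) (b := c)
    (fun k z => ⟨le_min ((hdn _).1.nonneg _ _) hc0.le, min_le_right _ _⟩)
    (fun k z hz => (hout _ z hz).trans (hout _ z hz).symm)
  have hu_lip_d := hliminf.abs_sub_le_of_tendsto hlip (hφ.comp hψ)
    (fun j z w => (abs_min_sub_min_le_max _ _ _ _).trans
      (by simpa using (hdn _).1.abs_sub_le x z w)) hu x y
  have hux : u x = 0 :=
    tendsto_nhds_unique (hu x) (by simp [trunc, (hdn _).1.self_eq_zero, hc0.le])
  have huy : u y = c := tendsto_nhds_unique (hu y)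
    (tendsto_const_nhds.congr fun j => (min_eq_right (hφc (ψ j))).symm)
  rw [hux, huy, zero_sub, abs_neg, abs_of_pos hc0] at hu_lip_d
  linarith

lemma eventually_dist_lt_of_isLengthDist [LocallyCompactSpace E] (hα : 0 < α)
    (hdn : ∀ n, IsDistance (dn n)) (hd : IsComparableDist α d) (hlen : IsLengthDist d)
    (hloc : ∀ x y c, 0 < c → d x y < c → IsCompact (closedBall x (α * c)) →
      ∀ᶠ n in atTop, dn n x y < c)
    {x y : E} {c : ℝ} (hc : d x y < c) : ∀ᶠ n in atTop, dn n x y < c := by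
  obtain ⟨ε, hε, hcε⟩ : ∃ ε > 0, d x y + 2 * ε = c := ⟨(c - d x y) / 2, by linarith, by ring⟩
  obtain ⟨γ, ⟨K, hK⟩, hγ0, hγ1, hγlen⟩ := hlen.exists_lipCurve_lt hd.1 x y hε
  obtain ⟨δ, hδ, hballs⟩ := (isCompact_Icc.image_of_continuousOn
    (hd.continuousOn_of_lipCurve hα ⟨K, hK⟩)).exists_pos_forall_isCompact_closedBall
  obtain ⟨k, hk⟩ := exists_nat_gt (α * (|K| + ε) / δ)
  have hk0 : (0 : ℝ) < k := lt_of_le_of_lt (by positivity) hk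
  have hk0' : k ≠ 0 := by exact_mod_cast hk0.ne'
  set z : ℕ → E := fun i => γ (i / k)
  have hmem : ∀ j : ℕ, j ≤ k → (j : ℝ) / k ∈ Icc (0 : ℝ) 1 := fun j hj =>
    ⟨by positivity, div_le_one_of_le₀ (by exact_mod_cast hj) hk0.le⟩
  have hstep : ∀ i ∈ Finset.range k,
      ∀ᶠ n in atTop, dn n (z (i + 1)) (z i) < d (z (i + 1)) (z i) + ε / k := by
    intro i hi
    have hi : i + 1 ≤ k := Finset.mem_range.1 hi
    have hd_step : d (z (i + 1)) (z i) ≤ |K| / k :=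
      calc d (z (i + 1)) (z i) ≤ K * |((i + 1 : ℕ) : ℝ) / k - i / k| :=
            hK _ (hmem _ hi) _ (hmem _ (by omega))
        _ = K / k := by
            push_cast; rw [add_div, add_sub_cancel_left, abs_of_pos (by positivity)]; ring
        _ ≤ |K| / k := by gcongr; exact le_abs_self K
    refine hloc _ _ _ (by positivity [hd.1.nonneg (z (i + 1)) (z i)])
      (lt_add_of_pos_right _ (by positivity)) (hballs _ ⟨_, hmem _ hi, rfl⟩ _ ?_)
    calc α * (d (z (i + 1)) (z i) + ε / k) ≤ α * (|K| + ε) / k := by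
          rw [mul_div_assoc, add_div]; gcongr
      _ ≤ δ := by
          rw [div_le_iff₀ hk0]; rw [div_lt_iff₀ hδ] at hk; linarith
  have hsum : ∑ i ∈ Finset.range k, d (z (i + 1)) (z i) < d x y + ε :=
    ((ENNReal.ofReal_lt_ofReal_iff').1
      ((sum_range_le_pathLength hd.1.nonneg γ hk0').trans_lt hγlen)).1
  filter_upwards [(eventually_all_finset _).2 hstep] with n hn
  calc dn n x y = dn n (z 0) (z k) := by simp [z, hγ0, hγ1, hk0']
    _ ≤ ∑ i ∈ Finset.range k, dn n (z (i + 1)) (z i) := (hdn n).le_range_sum z k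
    _ < ∑ i ∈ Finset.range k, (d (z (i + 1)) (z i) + ε / k) :=
        Finset.sum_lt_sum_of_nonempty (Finset.nonempty_range_iff.2 hk0') hn
    _ = ∑ i ∈ Finset.range k, d (z (i + 1)) (z i) + ε := by
        rw [Finset.sum_add_distrib, Finset.sum_const, Finset.card_range, nsmul_eq_mul]
        field_simp
    _ < c := by linarith

end GammaConvergence

theorem stmt10_general {X : Type*} [MetricSpace X] [LocallyCompactSpace X]
    (Ω : Set X) (hΩ : IsOpen Ω) (α : ℝ) (hα : 1 < α)
    (dn : ℕ → Ω → Ω → ℝ) (hdn : ∀ n, MemD α Ω (dn n))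
    (d : Ω → Ω → ℝ) (hd : MemD α Ω d)
    (hliminf : ∀ (un : ℕ → Ω → ℝ) (u : Ω → ℝ), (∀ n, IsLipFun (un n)) → IsLipFun u →
      UnifConvCompactsFun un u →
      Ffun d u ≤ liminf (fun n => Ffun (dn n) (un n)) atTop)
    (hlimsup : ∀ u : Ω → ℝ, IsLipFun u →
      ∃ un : ℕ → Ω → ℝ, (∀ n, IsLipFun (un n)) ∧ UnifConvCompactsFun un u ∧
        limsup (fun n => Ffun (dn n) (un n)) atTop ≤ Ffun d u) :
    TendstoUnifCompactly dn d := by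
  have hα0 : 0 < α := by linarith
  have := hΩ.locallyCompactSpace
  have hdn' : ∀ n, IsComparableDist α (dn n) := fun n => ⟨(hdn n).1, (hdn n).2.2⟩
  have hd' : IsComparableDist α d := ⟨hd.1, hd.2.2⟩
  -- `TendstoUnifCompactly dn d` is `UnifConvCompactsFun` for the uncurried distances on `Ω × Ω`.
  refine unifConvCompactsFun_of_tendsto (fun n => (hdn' n).lipschitzWith_uncurry) fun p => ?_
  refine tendsto_order.2 ⟨fun c hc => eventually_lt_dist_of_gammaLimsup hd' hlimsup hc,
    fun c hc => eventually_dist_lt_of_isLengthDist hα0 (fun n => (hdn n).1) hd' hd.2.1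
      (fun x y c hc0 hc hB => eventually_dist_lt_of_gammaLiminf hα0 hdn' hliminf hc0 hc hB) hc⟩

/-- Γ-convergence of the functionals `F_{dn}` to `F_d` implies uniform
convergence of the distances on compact subsets of `Ω × Ω`. -/
theorem stmt10 {X : Type*} [MetricSpace X] [LocallyCompactSpace X] [CompleteSpace X]
    (Ω : Set X) (hΩ : IsOpen Ω) (α : ℝ) (hα : 1 < α)
    (hne : ∃ d₀ : Ω → Ω → ℝ, MemD α Ω d₀)
    (dn : ℕ → Ω → Ω → ℝ) (hdn : ∀ n, MemD α Ω (dn n))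
    (d : Ω → Ω → ℝ) (hd : MemD α Ω d)
    (hliminf : ∀ (un : ℕ → Ω → ℝ) (u : Ω → ℝ), (∀ n, IsLipFun (un n)) → IsLipFun u →
      UnifConvCompactsFun un u →
      Ffun d u ≤ liminf (fun n => Ffun (dn n) (un n)) atTop)
    (hlimsup : ∀ u : Ω → ℝ, IsLipFun u →
      ∃ un : ℕ → Ω → ℝ, (∀ n, IsLipFun (un n)) ∧ UnifConvCompactsFun un u ∧
        limsup (fun n => Ffun (dn n) (un n)) atTop ≤ Ffun d u) :
    TendstoUnifCompactly dn d :=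
  stmt10_general Ω hΩ α hα dn hdn d hd hliminf hlimsup
end

section
/- There exists an open set Ω ⊆ ℝ² such that D_2(Ω, d_Eucl) is nonempty and not sequentially compact; more precisely, there exists a sequence (d_n)_{n∈ℕ} ⊆ D_2(Ω, d_Eucl) admitting no subsequence that converges, uniformly on compact subsets of Ω × Ω, to an element of D_2(Ω, d_Eucl). -/
open Filter MeasureTheory Set
open scoped ENNReal Topology

/-!
In the upper half-plane `Ω = {y > 0}` let `d_h` be the distance in which one may travel along the
horizontal line `{y = h}` at double speed:
`d_h(P, Q) = min (|P - Q|, inf_{a, b on the line} |P - a| + |a - b| / 2 + |b - Q|)`.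
It lies between `|·| / 2` and `|·|`, and for `h > 0` the line lies in `Ω`, so polygonal paths
`P → a → b → Q` inside `Ω` show that `d_h` is a length distance: `d_h ∈ D₂(Ω)`.
Translating the line by `h` moves `d_h` by at most `2h`, so `d_{1/(n+1)}` converges uniformly to
`d_0`, whose fast line is the boundary of `Ω`; any subsequential limit must therefore be `d_0`.
But `d_0` is not a length distance on `Ω`: it agrees with `|·|` between points whose distance is
at most the sum of their heights, and a curve in `Ω` stays at a positive height, so its
`d_0`-length is at least the Euclidean distance of its endpoints, while
`d_0((0,1), (8,1)) ≤ 1 + 4 + 1 < 8`.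
-/

section PathLength

variable {X : Type*}

noncomputable def intrinsicEDist (d : X → X → ℝ) (x y : X) : ℝ≥0∞ :=
  ⨅ (γ : ℝ → X) (_ : LipCurve d γ) (_ : γ 0 = x) (_ : γ 1 = y), pathLength d γ

lemma intrinsicEDist_le {d : X → X → ℝ} {γ : ℝ → X} (hγ : LipCurve d γ) {x y : X}
    (h0 : γ 0 = x) (h1 : γ 1 = y) : intrinsicEDist d x y ≤ pathLength d γ :=
  iInf₂_le_of_le γ hγ (iInf₂_le h0 h1)

lemma sum_le_pathLengthOn (d : X → X → ℝ) (γ : ℝ → X) {a b : ℝ} {k : ℕ} (t : Fin (k + 1) → ℝ)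
    (ht : Monotone t) (h0 : t 0 = a) (hk : t (Fin.last k) = b) :
    ∑ i : Fin k, ENNReal.ofReal (d (γ (t i.succ)) (γ (t i.castSucc))) ≤ pathLengthOn d γ a b :=
  le_iSup_of_le k <| le_iSup_of_le t <| le_iSup_of_le ht <| le_iSup_of_le h0 <|
    le_iSup_of_le hk le_rfl

lemma ofReal_le_pathLengthOn (d : X → X → ℝ) (γ : ℝ → X) {a b : ℝ} (hab : a ≤ b) :
    ENNReal.ofReal (d (γ b) (γ a)) ≤ pathLengthOn d γ a b := by
  have hmono : Monotone ![a, b] := by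
    intro i j hij
    fin_cases i <;> fin_cases j <;> simp_all
  simpa using sum_le_pathLengthOn d γ ![a, b] hmono rfl rfl

lemma ofReal_le_intrinsicEDist {d : X → X → ℝ} (hsymm : ∀ x y, d x y = d y x) (x y : X) :
    ENNReal.ofReal (d x y) ≤ intrinsicEDist d x y :=
  le_iInf₂ fun γ _ => le_iInf₂ fun h0 h1 => by
    have h := ofReal_le_pathLengthOn d γ (zero_le_one (α := ℝ))
    rwa [h0, h1, hsymm] at h

lemma sum_succ_sub_castSucc {k : ℕ} (t : Fin (k + 1) → ℝ) :
    ∑ i : Fin k, (t i.succ - t i.castSucc) = t (Fin.last k) - t 0 := by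
  induction k with
  | zero => simp
  | succ k ih =>
    rw [Fin.sum_univ_castSucc]
    have h := ih (fun j : Fin (k + 1) => t j.castSucc)
    simp only [Fin.succ_castSucc] at h ⊢
    rw [h, Fin.succ_last, Fin.castSucc_zero]
    ring

lemma pathLengthOn_le_of_le_mul (d : X → X → ℝ) (γ : ℝ → X) {a b C : ℝ} (hC : 0 ≤ C)
    (hγ : ∀ s t, a ≤ s → s ≤ t → t ≤ b → d (γ t) (γ s) ≤ C * (t - s)) :
    pathLengthOn d γ a b ≤ ENNReal.ofReal (C * (b - a)) := by
  refine iSup_le fun k => iSup_le fun t => iSup_le fun ht => iSup_le fun h0 => iSup_le fun hk => ?_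
  have hstep : ∀ i : Fin k, t i.castSucc ≤ t i.succ := fun i => ht (Fin.castSucc_le_succ i)
  have hmem : ∀ i, a ≤ t i ∧ t i ≤ b := fun i =>
    ⟨h0 ▸ ht (Fin.zero_le i), hk ▸ ht (Fin.le_last i)⟩
  calc ∑ i : Fin k, ENNReal.ofReal (d (γ (t i.succ)) (γ (t i.castSucc)))
      ≤ ∑ i : Fin k, ENNReal.ofReal (C * (t i.succ - t i.castSucc)) :=
        Finset.sum_le_sum fun i _ => ENNReal.ofReal_le_ofReal <|
          hγ _ _ (hmem _).1 (hstep i) (hmem _).2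
    _ = ENNReal.ofReal (C * (b - a)) := by
        rw [← ENNReal.ofReal_sum_of_nonneg fun i _ => mul_nonneg hC (sub_nonneg.2 (hstep i)),
          ← Finset.mul_sum, sum_succ_sub_castSucc, h0, hk]

lemma pathLengthOn_le_add (d : X → X → ℝ) (γ : ℝ → X) {a m b : ℝ} (ham : a ≤ m) (hmb : m ≤ b)
    (htri : ∀ x y z, d x z ≤ d x y + d y z) :
    pathLengthOn d γ a b ≤ pathLengthOn d γ a m + pathLengthOn d γ m b := by
  refine iSup_le fun k => iSup_le fun t => iSup_le fun ht => iSup_le fun h0 => iSup_le fun hk => ?_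
  -- Cut every step of the partition at `m`: the clipped partitions are partitions of `[a, m]`
  -- and `[m, b]`, and only the step containing `m` needs the triangle inequality.
  have hcut : ∀ i : Fin k, ENNReal.ofReal (d (γ (t i.succ)) (γ (t i.castSucc))) ≤
      ENNReal.ofReal (d (γ (min (t i.succ) m)) (γ (min (t i.castSucc) m))) +
        ENNReal.ofReal (d (γ (max (t i.succ) m)) (γ (max (t i.castSucc) m))) := by
    intro i
    have hle : t i.castSucc ≤ t i.succ := ht (Fin.castSucc_le_succ i)
    rcases le_total (t i.succ) m with hc | hc
    · rw [min_eq_left hc, min_eq_left (hle.trans hc)]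
      exact le_self_add
    rcases le_total m (t i.castSucc) with hc' | hc'
    · rw [max_eq_left hc, max_eq_left hc']
      exact le_add_self
    rw [min_eq_right hc, min_eq_left hc', max_eq_left hc, max_eq_right hc', add_comm]
    exact (ENNReal.ofReal_le_ofReal (htri _ _ _)).trans ENNReal.ofReal_add_le
  calc ∑ i : Fin k, ENNReal.ofReal (d (γ (t i.succ)) (γ (t i.castSucc)))
      ≤ ∑ i : Fin k, (ENNReal.ofReal (d (γ (min (t i.succ) m)) (γ (min (t i.castSucc) m))) +
          ENNReal.ofReal (d (γ (max (t i.succ) m)) (γ (max (t i.castSucc) m)))) :=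
        Finset.sum_le_sum fun i _ => hcut i
    _ ≤ pathLengthOn d γ a m + pathLengthOn d γ m b := by
        rw [Finset.sum_add_distrib]
        gcongr
        · exact sum_le_pathLengthOn d γ (fun i => min (t i) m) (ht.min monotone_const)
            (by rw [h0, min_eq_left ham]) (by rw [hk, min_eq_right hmb])
        · exact sum_le_pathLengthOn d γ (fun i => max (t i) m) (ht.max monotone_const)
            (by rw [h0, max_eq_right ham]) (by rw [hk, max_eq_left hmb])

lemma ofReal_dist_le_pathLength [PseudoMetricSpace X] (d : X → X → ℝ) {γ : ℝ → X} {δ : ℝ}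
    (hδ : 0 < δ) (hγ : ∀ s ∈ Icc (0 : ℝ) 1, ∀ t ∈ Icc (0 : ℝ) 1, dist s t ≤ δ →
      dist (γ s) (γ t) ≤ d (γ s) (γ t)) :
    ENNReal.ofReal (dist (γ 0) (γ 1)) ≤ pathLength d γ := by
  obtain ⟨k, hk⟩ := exists_nat_gt δ⁻¹
  have hk0 : (0 : ℝ) < k := (inv_pos.2 hδ).trans hk
  set t : ℕ → ℝ := fun i => i / k
  have ht : ∀ i ≤ k, t i ∈ Icc (0 : ℝ) 1 := fun i hi =>
    ⟨by positivity, div_le_one_of_le₀ (by exact_mod_cast hi) hk0.le⟩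
  have hstep : ∀ i < k, dist (γ (t i)) (γ (t (i + 1))) ≤ d (γ (t (i + 1))) (γ (t i)) := by
    intro i hi
    rw [dist_comm]
    refine hγ _ (ht _ hi) _ (ht _ hi.le) ?_
    rw [Real.dist_eq, show t (i + 1) - t i = (k : ℝ)⁻¹ by simp only [t]; push_cast; ring,
      abs_of_pos (inv_pos.2 hk0)]
    exact (inv_lt_of_inv_lt₀ hδ hk).le
  calc ENNReal.ofReal (dist (γ 0) (γ 1))
      = ENNReal.ofReal (dist (γ (t 0)) (γ (t k))) := by simp [t, hk0.ne']
    _ ≤ ENNReal.ofReal (∑ i ∈ Finset.range k, dist (γ (t i)) (γ (t (i + 1)))) :=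
        ENNReal.ofReal_le_ofReal (dist_le_range_sum_dist (fun i => γ (t i)) k)
    _ ≤ ∑ i ∈ Finset.range k, ENNReal.ofReal (d (γ (t (i + 1))) (γ (t i))) := by
        rw [ENNReal.ofReal_sum_of_nonneg fun i _ => dist_nonneg]
        exact Finset.sum_le_sum fun i hi =>
          ENNReal.ofReal_le_ofReal (hstep i (Finset.mem_range.1 hi))
    _ = ∑ i : Fin k, ENNReal.ofReal (d (γ (t (i.succ : ℕ))) (γ (t (i.castSucc : ℕ)))) :=
        (Fin.sum_univ_eq_sum_range (fun i => ENNReal.ofReal (d (γ (t (i + 1))) (γ (t i)))) k).symm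
    _ ≤ pathLength d γ :=
        sum_le_pathLengthOn d γ (fun i : Fin (k + 1) => t i)
          (fun i j hij => by simp only [t]; gcongr; exact_mod_cast hij) (by simp [t])
          (by simp [t, hk0.ne'])

end PathLength

section Road

variable {X : Type*} [PseudoMetricSpace X] {L : Set X} {P Q R : X}

noncomputable def roadCost (L : Set X) (P Q : X) : ℝ :=
  ⨅ ab : L × L, dist P ab.1 + 2⁻¹ * dist (ab.1 : X) ab.2 + dist (ab.2 : X) Q

noncomputable def roadDist (L : Set X) (P Q : X) : ℝ :=
  min (dist P Q) (roadCost L P Q)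

lemma roadCost_le {a b : X} (ha : a ∈ L) (hb : b ∈ L) :
    roadCost L P Q ≤ dist P a + 2⁻¹ * dist a b + dist b Q :=
  ciInf_le ⟨0, by rintro _ ⟨ab, rfl⟩; positivity⟩ ((⟨a, ha⟩, ⟨b, hb⟩) : L × L)

lemma le_roadCost [Nonempty L] {r : ℝ}
    (h : ∀ a ∈ L, ∀ b ∈ L, r ≤ dist P a + 2⁻¹ * dist a b + dist b Q) : r ≤ roadCost L P Q :=
  le_ciInf fun ab => h _ ab.1.2 _ ab.2.2

lemma half_dist_le_roadCost [Nonempty L] : 2⁻¹ * dist P Q ≤ roadCost L P Q :=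
  le_roadCost fun a _ b _ => by
    linarith [dist_triangle4 P a b Q, dist_nonneg (x := P) (y := a), dist_nonneg (x := b) (y := Q)]

lemma roadCost_comm [Nonempty L] : roadCost L P Q = roadCost L Q P := by
  have key : ∀ P Q : X, roadCost L P Q ≤ roadCost L Q P := fun P Q =>
    le_roadCost fun a ha b hb => (roadCost_le hb ha).trans_eq <| by
      rw [dist_comm P b, dist_comm b a, dist_comm a Q]; ring
  exact (key P Q).antisymm (key Q P)

lemma roadCost_le_dist_add [Nonempty L] : roadCost L P Q ≤ dist P R + roadCost L R Q :=
  sub_le_iff_le_add'.1 <| le_roadCost fun a ha b hb => by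
    linarith [roadCost_le (P := P) (Q := Q) ha hb, dist_triangle P R a]

lemma roadCost_le_add_dist [Nonempty L] : roadCost L P Q ≤ roadCost L P R + dist R Q := by
  rw [roadCost_comm, roadCost_comm (P := P), dist_comm, add_comm]
  exact roadCost_le_dist_add

lemma roadCost_triangle [Nonempty L] : roadCost L P Q ≤ roadCost L P R + roadCost L R Q :=
  sub_le_iff_le_add.1 <| le_roadCost fun a ha b hb => sub_le_comm.1 <|
    le_roadCost fun a' ha' b' hb' => by
      linarith [roadCost_le (P := P) (Q := Q) ha hb', dist_triangle4 a b a' b', dist_triangle b R a',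
        dist_nonneg (x := b) (y := a')]

lemma roadDist_le_dist : roadDist L P Q ≤ dist P Q := min_le_left _ _

lemma roadDist_le_roadCost : roadDist L P Q ≤ roadCost L P Q := min_le_right _ _

lemma half_dist_le_roadDist [Nonempty L] : 2⁻¹ * dist P Q ≤ roadDist L P Q :=
  le_min (by linarith [dist_nonneg (x := P) (y := Q)]) half_dist_le_roadCost

lemma roadDist_comm [Nonempty L] : roadDist L P Q = roadDist L Q P := by
  rw [roadDist, roadDist, dist_comm, roadCost_comm]

lemma roadDist_triangle [Nonempty L] : roadDist L P Q ≤ roadDist L P R + roadDist L R Q := by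
  rcases min_cases (dist P R) (roadCost L P R) with ⟨hPR, -⟩ | ⟨hPR, -⟩ <;>
    rcases min_cases (dist R Q) (roadCost L R Q) with ⟨hRQ, -⟩ | ⟨hRQ, -⟩ <;>
    unfold roadDist <;> rw [hPR, hRQ]
  · exact (min_le_left _ _).trans (dist_triangle P R Q)
  · exact (min_le_right _ _).trans roadCost_le_dist_add
  · exact (min_le_right _ _).trans roadCost_le_add_dist
  · exact (min_le_right _ _).trans roadCost_triangle

lemma roadDist_le_half_dist (hP : P ∈ L) (hQ : Q ∈ L) : roadDist L P Q ≤ 2⁻¹ * dist P Q :=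
  roadDist_le_roadCost.trans (by simpa using roadCost_le (P := P) (Q := Q) hP hQ)

lemma roadDist_eq_dist [Nonempty L] (h : ∀ a ∈ L, ∀ b ∈ L, dist P Q ≤ dist P a + dist b Q) :
    roadDist L P Q = dist P Q :=
  min_eq_left <| le_roadCost fun a ha b hb => by
    linarith [h a ha b hb, dist_nonneg (x := a) (y := b)]

lemma isDistance_roadDist {X : Type*} [MetricSpace X] (L : Set X) [Nonempty L] (S : Set X) :
    IsDistance (fun x y : S => roadDist L x y) := by
  refine ⟨fun x y => roadDist_comm, fun x y z => roadDist_triangle, fun x y => ⟨fun h => ?_, ?_⟩⟩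
  · have := half_dist_le_roadDist (L := L) (P := (x : X)) (Q := y)
    exact Subtype.ext (dist_le_zero.1 (by linarith))
  · rintro rfl
    exact le_antisymm (roadDist_le_dist.trans_eq (dist_self _))
      (le_trans (by positivity) half_dist_le_roadDist)

section Translation

variable {E : Type*} [SeminormedAddCommGroup E] {L L' : Set E}

lemma roadCost_le_of_add_mem [Nonempty L] (v : E) (hv : ∀ a ∈ L, a + v ∈ L') (P Q : E) :
    roadCost L' P Q ≤ roadCost L P Q + 2 * ‖v‖ :=
  sub_le_iff_le_add.1 <| le_roadCost fun a ha b hb => by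
    have := roadCost_le (P := P) (Q := Q) (hv a ha) (hv b hb)
    rw [dist_add_right] at this
    linarith [dist_triangle P a (a + v), dist_triangle (b + v) b Q, dist_self_add_right v a,
      dist_self_add_right v b, dist_comm b (b + v)]

lemma abs_roadDist_sub_roadDist_le [Nonempty L] [Nonempty L'] (v : E)
    (hv : ∀ a, a + v ∈ L' ↔ a ∈ L) (P Q : E) :
    |roadDist L' P Q - roadDist L P Q| ≤ 2 * ‖v‖ := by
  have h₁ := roadCost_le_of_add_mem v (fun a => (hv a).2) P Q
  have h₂ := roadCost_le_of_add_mem (-v) (fun a ha => (hv _).1 (by simpa using ha)) P Q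
  rw [norm_neg] at h₂
  refine (abs_min_sub_min_le_max _ _ _ _).trans ?_
  rw [sub_self, abs_zero, max_eq_right (abs_nonneg _), abs_sub_le_iff]
  constructor <;> linarith

end Translation

end Road

section Polyline

variable {E : Type*} [NormedAddCommGroup E] [NormedSpace ℝ E]

noncomputable def ramp (c : ℝ) : ℝ := projIcc (0 : ℝ) 1 zero_le_one c

lemma ramp_of_nonpos {c : ℝ} (hc : c ≤ 0) : ramp c = 0 := by
  simp [ramp, projIcc_of_le_left _ hc]

lemma ramp_of_one_le {c : ℝ} (hc : 1 ≤ c) : ramp c = 1 := by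
  simp [ramp, projIcc_of_right_le _ hc]

lemma ramp_mem_Icc (c : ℝ) : ramp c ∈ Icc (0 : ℝ) 1 := (projIcc (0 : ℝ) 1 zero_le_one c).2

lemma abs_ramp_sub_ramp_le (s t : ℝ) : |ramp s - ramp t| ≤ |s - t| :=
  abs_projIcc_sub_projIcc zero_le_one

lemma add_ramp_smul_sub_mem_segment (p q : E) (c : ℝ) :
    p + ramp c • (q - p) ∈ segment ℝ p q := by
  rw [segment_eq_image']
  exact ⟨ramp c, ramp_mem_Icc c, rfl⟩

lemma dist_add_ramp_smul_le (p v : E) (s t : ℝ) :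
    dist (p + ramp s • v) (p + ramp t • v) ≤ |s - t| * ‖v‖ := by
  rw [dist_add_left, dist_eq_norm, ← sub_smul, norm_smul, Real.norm_eq_abs]
  exact mul_le_mul_of_nonneg_right (abs_ramp_sub_ramp_le s t) (norm_nonneg v)

-- Runs along `[x, a]`, `[a, b]`, `[b, y]` during the thirds of `[0, 1]`.
noncomputable def polyline (x a b y : E) (u : ℝ) : E :=
  x + ramp (3 * u) • (a - x) + ramp (3 * u - 1) • (b - a) + ramp (3 * u - 2) • (y - b)

variable {x a b y : E} {u : ℝ}

lemma polyline_of_le_third (hu : u ≤ 1 / 3) : polyline x a b y u = x + ramp (3 * u) • (a - x) := by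
  rw [polyline, ramp_of_nonpos (c := 3 * u - 1) (by linarith),
    ramp_of_nonpos (c := 3 * u - 2) (by linarith)]
  simp

lemma polyline_of_mem_middle (hu₁ : 1 / 3 ≤ u) (hu₂ : u ≤ 2 / 3) :
    polyline x a b y u = a + ramp (3 * u - 1) • (b - a) := by
  rw [polyline, ramp_of_one_le (c := 3 * u) (by linarith),
    ramp_of_nonpos (c := 3 * u - 2) (by linarith)]
  simp

lemma polyline_of_two_thirds_le (hu : 2 / 3 ≤ u) :
    polyline x a b y u = b + ramp (3 * u - 2) • (y - b) := by
  rw [polyline, ramp_of_one_le (c := 3 * u) (by linarith),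
    ramp_of_one_le (c := 3 * u - 1) (by linarith)]
  simp

lemma polyline_zero : polyline x a b y 0 = x := by
  rw [polyline_of_le_third (by norm_num), mul_zero, ramp_of_nonpos le_rfl, zero_smul, add_zero]

lemma polyline_one : polyline x a b y 1 = y := by
  rw [polyline_of_two_thirds_le (by norm_num), ramp_of_one_le (by norm_num), one_smul,
    add_sub_cancel]

lemma polyline_mem {S : Set E} (hS : Convex ℝ S) (hx : x ∈ S) (ha : a ∈ S) (hb : b ∈ S)
    (hy : y ∈ S) (u : ℝ) : polyline x a b y u ∈ S := by
  rcases le_total u (1 / 3) with hu | hu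
  · rw [polyline_of_le_third hu]
    exact hS.segment_subset hx ha (add_ramp_smul_sub_mem_segment _ _ _)
  rcases le_total u (2 / 3) with hu' | hu'
  · rw [polyline_of_mem_middle hu hu']
    exact hS.segment_subset ha hb (add_ramp_smul_sub_mem_segment _ _ _)
  · rw [polyline_of_two_thirds_le hu']
    exact hS.segment_subset hb hy (add_ramp_smul_sub_mem_segment _ _ _)

lemma dist_polyline_le (s t : ℝ) :
    dist (polyline x a b y s) (polyline x a b y t) ≤
      3 * (‖a - x‖ + ‖b - a‖ + ‖y - b‖) * |s - t| := by
  have h : ∀ (k : ℝ) (v : E), ‖(ramp (3 * s - k) - ramp (3 * t - k)) • v‖ ≤ 3 * |s - t| * ‖v‖ :=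
    fun k v => by
      rw [norm_smul, Real.norm_eq_abs]
      refine mul_le_mul_of_nonneg_right ((abs_ramp_sub_ramp_le _ _).trans_eq ?_) (norm_nonneg v)
      rw [show 3 * s - k - (3 * t - k) = 3 * (s - t) by ring, abs_mul, abs_of_pos three_pos]
  have hdiff : polyline x a b y s - polyline x a b y t =
      (ramp (3 * s - 0) - ramp (3 * t - 0)) • (a - x) +
        (ramp (3 * s - 1) - ramp (3 * t - 1)) • (b - a) +
        (ramp (3 * s - 2) - ramp (3 * t - 2)) • (y - b) := by
    simp only [polyline, sub_zero, sub_smul]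
    abel
  rw [dist_eq_norm, hdiff]
  refine (norm_add₃_le ..).trans ?_
  linarith [h 0 (a - x), h 1 (b - a), h 2 (y - b)]

lemma lipCurve_polyline {d : E → E → ℝ} (hd : ∀ p q, d p q ≤ dist p q) :
    LipCurve d (polyline x a b y) :=
  ⟨_, fun s _ t _ => (hd _ _).trans (dist_polyline_le s t)⟩

lemma pathLengthOn_le_of_eq_add_ramp_smul (d : E → E → ℝ) (σ : ℝ → E) {p q : E} {α κ : ℝ}
    (hκ : 0 ≤ κ) (hσ : ∀ u ∈ Icc α (α + 1 / 3), σ u = p + ramp (3 * u - 3 * α) • (q - p))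
    (hd : ∀ r ∈ segment ℝ p q, ∀ r' ∈ segment ℝ p q, d r r' ≤ κ * dist r r') :
    pathLengthOn d σ α (α + 1 / 3) ≤ ENNReal.ofReal (κ * dist p q) := by
  have hbound : ∀ s t, α ≤ s → s ≤ t → t ≤ α + 1 / 3 →
      d (σ t) (σ s) ≤ 3 * κ * ‖q - p‖ * (t - s) := by
    intro s t hs hst ht
    rw [hσ s ⟨hs, hst.trans ht⟩, hσ t ⟨hs.trans hst, ht⟩]
    refine (hd _ (add_ramp_smul_sub_mem_segment _ _ _) _
      (add_ramp_smul_sub_mem_segment _ _ _)).trans ?_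
    have := dist_add_ramp_smul_le p (q - p) (3 * t - 3 * α) (3 * s - 3 * α)
    rw [show 3 * t - 3 * α - (3 * s - 3 * α) = 3 * (t - s) by ring,
      abs_of_nonneg (by linarith)] at this
    nlinarith
  refine (pathLengthOn_le_of_le_mul d σ (by positivity) hbound).trans_eq ?_
  rw [dist_eq_norm']
  ring_nf

lemma pathLength_polyline_le {d : E → E → ℝ} (htri : ∀ p q r, d p r ≤ d p q + d q r)
    (hd : ∀ p q, d p q ≤ dist p q) {c : ℝ} (hc : 0 ≤ c)
    (hab : ∀ p ∈ segment ℝ a b, ∀ q ∈ segment ℝ a b, d p q ≤ c * dist p q) :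
    pathLength d (polyline x a b y) ≤ ENNReal.ofReal (dist x a + c * dist a b + dist b y) := by
  have hd₁ : ∀ p q, d p q ≤ 1 * dist p q := fun p q => (one_mul (dist p q)).symm ▸ hd p q
  have h₁ := pathLengthOn_le_of_eq_add_ramp_smul d (polyline x a b y) (α := 0) zero_le_one
    (fun u hu => by rw [mul_zero, sub_zero]; exact polyline_of_le_third (by linarith [hu.2]))
    (fun p _ q _ => hd₁ p q)
  have h₂ := pathLengthOn_le_of_eq_add_ramp_smul d (polyline x a b y) (α := 1 / 3) hc
    (fun u hu => by
      rw [show 3 * (1 / 3 : ℝ) = 1 by norm_num]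
      exact polyline_of_mem_middle hu.1 (by linarith [hu.2])) hab
  have h₃ := pathLengthOn_le_of_eq_add_ramp_smul d (polyline x a b y) (α := 2 / 3) zero_le_one
    (fun u hu => by
      rw [show 3 * (2 / 3 : ℝ) = 2 by norm_num]
      exact polyline_of_two_thirds_le hu.1)
    (fun p _ q _ => hd₁ p q)
  norm_num at h₁ h₂ h₃
  calc pathLength d (polyline x a b y)
      ≤ pathLengthOn d (polyline x a b y) 0 (1 / 3) +
          pathLengthOn d (polyline x a b y) (1 / 3) 1 :=
        pathLengthOn_le_add d _ (by norm_num) (by norm_num) htri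
    _ ≤ pathLengthOn d (polyline x a b y) 0 (1 / 3) +
          (pathLengthOn d (polyline x a b y) (1 / 3) (2 / 3) +
            pathLengthOn d (polyline x a b y) (2 / 3) 1) := by
        gcongr
        exact pathLengthOn_le_add d _ (by norm_num) (by norm_num) htri
    _ ≤ ENNReal.ofReal (dist x a) + (ENNReal.ofReal (c * dist a b) + ENNReal.ofReal (dist b y)) :=
        add_le_add h₁ (add_le_add h₂ h₃)
    _ = ENNReal.ofReal (dist x a + c * dist a b + dist b y) := by
        rw [ENNReal.ofReal_add (by positivity) (by positivity),
          ENNReal.ofReal_add (by positivity) (by positivity), add_assoc]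

end Polyline

section LengthSpace

variable {E : Type*} [NormedAddCommGroup E] [NormedSpace ℝ E] {S L : Set E} [Nonempty L]

lemma intrinsicEDist_roadDist_le (hS : Convex ℝ S) (x y : S) {a b : E} (ha : a ∈ S) (hb : b ∈ S)
    {c : ℝ} (hc : 0 ≤ c) (hab : ∀ p ∈ segment ℝ a b, ∀ q ∈ segment ℝ a b,
      roadDist L p q ≤ c * dist p q) :
    intrinsicEDist (fun p q : S => roadDist L p q) x y ≤
      ENNReal.ofReal (dist (x : E) a + c * dist a b + dist b (y : E)) := by
  let γ : ℝ → S := fun u => ⟨polyline x a b y u, polyline_mem hS x.2 ha hb y.2 u⟩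
  have hlip : LipCurve (fun p q : S => roadDist L p q) γ :=
    lipCurve_polyline (x := (x : E)) (y := (y : E)) fun _ _ => roadDist_le_dist
  exact (intrinsicEDist_le hlip (Subtype.ext polyline_zero) (Subtype.ext polyline_one)).trans <|
    pathLength_polyline_le (d := roadDist L) (x := (x : E)) (y := (y : E))
      (fun _ _ _ => roadDist_triangle) (fun _ _ => roadDist_le_dist) hc hab

lemma isLengthDist_roadDist (hS : Convex ℝ S) (hL : Convex ℝ L) (hLS : L ⊆ S) :
    IsLengthDist (fun p q : S => roadDist L p q) := by
  intro x y
  change ENNReal.ofReal (roadDist L x y) = intrinsicEDist _ x y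
  refine le_antisymm (ofReal_le_intrinsicEDist (fun _ _ => roadDist_comm) x y) ?_
  have hstraight := intrinsicEDist_roadDist_le (L := L) hS x y x.2 x.2 zero_le_one
    fun p _ q _ => (one_mul (dist p q)).symm ▸ roadDist_le_dist
  have hroad : intrinsicEDist (fun p q : S => roadDist L p q) x y ≤
      ENNReal.ofReal (roadCost L x y) := by
    rw [roadCost, ENNReal.ofReal_iInf]
    exact le_iInf fun ab => intrinsicEDist_roadDist_le hS x y (hLS ab.1.2) (hLS ab.2.2)
      (by norm_num) fun p hp q hq =>
        roadDist_le_half_dist (hL.segment_subset ab.1.2 ab.2.2 hp)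
          (hL.segment_subset ab.1.2 ab.2.2 hq)
  simp only [dist_self, mul_zero, zero_add] at hstraight
  rw [roadDist, ENNReal.ofReal_min]
  exact le_min hstraight hroad

end LengthSpace

section HalfPlane

local notation "ℝ²" => EuclideanSpace ℝ (Fin 2)

def upperHalfPlane : Set ℝ² := {p | 0 < p 1}

def horizontalLine (h : ℝ) : Set ℝ² := {p | p 1 = h}

instance (h : ℝ) : Nonempty (horizontalLine h) :=
  ⟨⟨EuclideanSpace.single 1 h, by simp [horizontalLine]⟩⟩

lemma isLinearMap_coord_one : IsLinearMap ℝ (fun p : ℝ² => p 1) :=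
  ⟨fun _ _ => rfl, fun _ _ => rfl⟩

lemma isOpen_upperHalfPlane : IsOpen upperHalfPlane :=
  isOpen_lt continuous_const (by fun_prop)

lemma convex_upperHalfPlane : Convex ℝ upperHalfPlane :=
  convex_halfSpace_gt isLinearMap_coord_one 0

lemma convex_horizontalLine (h : ℝ) : Convex ℝ (horizontalLine h) :=
  convex_hyperplane isLinearMap_coord_one h

lemma horizontalLine_subset_upperHalfPlane {h : ℝ} (hh : 0 < h) :
    horizontalLine h ⊆ upperHalfPlane := fun p (hp : p 1 = h) =>
  show 0 < p 1 from hp ▸ hh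

lemma memD_roadDist_horizontalLine {h : ℝ} (hh : 0 < h) :
    MemD 2 upperHalfPlane (fun x y => roadDist (horizontalLine h) x y) :=
  ⟨isDistance_roadDist _ _,
    isLengthDist_roadDist convex_upperHalfPlane (convex_horizontalLine h)
      (horizontalLine_subset_upperHalfPlane hh),
    fun _ _ => ⟨half_dist_le_roadDist,
      roadDist_le_dist.trans (le_mul_of_one_le_left dist_nonneg one_le_two)⟩⟩

lemma lipschitzWith_roadDist_horizontalLine (P Q : ℝ²) :
    LipschitzWith 2 (fun h => roadDist (horizontalLine h) P Q) := by
  refine LipschitzWith.of_dist_le_mul fun h h' => ?_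
  have := abs_roadDist_sub_roadDist_le (L := horizontalLine h') (L' := horizontalLine h)
    (EuclideanSpace.single 1 (h - h')) (fun a => by
      change a 1 + (h - h') = h ↔ a 1 = h'
      constructor <;> intro <;> linarith) P Q
  rwa [PiLp.norm_single, Real.norm_eq_abs, ← Real.dist_eq, ← Real.dist_eq] at this

lemma roadDist_horizontalLine_zero {P Q : ℝ²} (hPQ : dist P Q ≤ P 1 + Q 1) :
    roadDist (horizontalLine 0) P Q = dist P Q :=
  roadDist_eq_dist fun a ha b hb => by
    have ha' := PiLp.dist_apply_le P a 1
    have hb' := PiLp.dist_apply_le b Q 1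
    change a 1 = 0 at ha
    change b 1 = 0 at hb
    rw [Real.dist_eq, ha, sub_zero] at ha'
    rw [Real.dist_eq, hb, zero_sub, abs_neg] at hb'
    linarith [le_abs_self (P 1), le_abs_self (Q 1)]

lemma ofReal_dist_le_pathLength_roadDist_zero {γ : ℝ → upperHalfPlane}
    (hγ : LipCurve (fun x y : upperHalfPlane => roadDist (horizontalLine 0) x y) γ) :
    ENNReal.ofReal (dist (γ 0) (γ 1)) ≤
      pathLength (fun x y : upperHalfPlane => roadDist (horizontalLine 0) x y) γ := by
  obtain ⟨K, hK⟩ := hγ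
  have hlip : LipschitzOnWith (2 * K).toNNReal γ (Icc 0 1) :=
    .of_dist_le' fun s hs t ht => by
      have hhalf := half_dist_le_roadDist (L := horizontalLine 0) (P := (γ s : ℝ²)) (Q := γ t)
      have hKst : roadDist (horizontalLine 0) (γ s) (γ t) ≤ K * |s - t| := hK s hs t ht
      rw [Real.dist_eq, Subtype.dist_eq]
      linarith
  have hheight : ContinuousOn (fun u => (γ u : ℝ²) 1) (Icc 0 1) :=
    (show Continuous fun p : upperHalfPlane => (p : ℝ²) 1 by fun_prop).comp_continuousOn
      hlip.continuousOn
  -- The curve stays above the height `m` of `γ u₀`, and `d_0 = dist` on steps shorter than `m`.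
  obtain ⟨u₀, -, hu₀⟩ := isCompact_Icc.exists_isMinOn (nonempty_Icc.2 zero_le_one) hheight
  obtain ⟨δ, hδ, hγδ⟩ :=
    Metric.uniformContinuousOn_iff_le.1 hlip.uniformContinuousOn _ (γ u₀).2
  refine ofReal_dist_le_pathLength _ hδ fun s hs t ht hst =>
    (roadDist_horizontalLine_zero ?_).ge
  have hclose : dist (γ s : ℝ²) (γ t) ≤ (γ u₀ : ℝ²) 1 := hγδ s hs t ht hst
  have hlow : (γ u₀ : ℝ²) 1 ≤ (γ s : ℝ²) 1 := hu₀ hs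
  have hpos : 0 < (γ t : ℝ²) 1 := (γ t).2
  linarith

lemma not_isLengthDist_roadDist_zero :
    ¬ IsLengthDist (fun x y : upperHalfPlane => roadDist (horizontalLine 0) x y) := by
  intro hlen
  let P : upperHalfPlane := ⟨!₂[0, 1], show (0 : ℝ) < 1 from one_pos⟩
  let Q : upperHalfPlane := ⟨!₂[8, 1], show (0 : ℝ) < 1 from one_pos⟩
  have hPQ : dist (P : ℝ²) Q = 8 := by simp [P, Q, EuclideanSpace.dist_eq, Fin.sum_univ_two]
  have hshort : roadDist (horizontalLine 0) P Q ≤ 6 := by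
    refine roadDist_le_roadCost.trans ((roadCost_le (a := !₂[0, 0]) (b := !₂[8, 0])
      (by simp [horizontalLine]) (by simp [horizontalLine])).trans_eq ?_)
    simp [P, Q, EuclideanSpace.dist_eq, Fin.sum_univ_two]
    norm_num
  have hlong : ENNReal.ofReal 8 ≤ ENNReal.ofReal (roadDist (horizontalLine 0) P Q) := by
    rw [← hPQ]
    exact (hlen P Q).symm ▸ le_iInf₂ fun γ hγ => le_iInf₂ fun h0 h1 =>
      h0 ▸ h1 ▸ ofReal_dist_le_pathLength_roadDist_zero hγ
  rcases ENNReal.ofReal_le_ofReal_iff'.1 hlong with h | h <;> linarith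

end HalfPlane

lemma TendstoUnifCompactly.tendsto_apply {E : Type*} [TopologicalSpace E] {dn : ℕ → E → E → ℝ}
    {d : E → E → ℝ} (h : TendstoUnifCompactly dn d) (x y : E) :
    Tendsto (fun n => dn n x y) atTop (𝓝 (d x y)) :=
  Metric.tendsto_atTop.2 fun ε hε =>
    let ⟨N, hN⟩ := h {(x, y)} isCompact_singleton ε hε
    ⟨N, fun n hn => hN n hn (x, y) rfl⟩

/-- there is an open set `Ω ⊆ ℝ²` with `𝒟₂(Ω) ≠ ∅` which is not
sequentially compact: some sequence in `𝒟₂(Ω)` has no subsequence converging,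
uniformly on compact subsets of `Ω × Ω`, to an element of `𝒟₂(Ω)`. -/
theorem stmt12 :
    ∃ Ω : Set (EuclideanSpace ℝ (Fin 2)), IsOpen Ω ∧
      (∃ d : Ω → Ω → ℝ, MemD 2 Ω d) ∧
      ∃ dn : ℕ → Ω → Ω → ℝ, (∀ n, MemD 2 Ω (dn n)) ∧
        ∀ φ : ℕ → ℕ, StrictMono φ → ∀ e : Ω → Ω → ℝ, MemD 2 Ω e →
          ¬ TendstoUnifCompactly (fun i => dn (φ i)) e := by
  have hpos : ∀ n : ℕ, (0 : ℝ) < 1 / (n + 1) := fun n => by positivity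
  refine ⟨upperHalfPlane, isOpen_upperHalfPlane, ⟨_, memD_roadDist_horizontalLine one_pos⟩,
    fun n x y => roadDist (horizontalLine (1 / (n + 1))) x y,
    fun n => memD_roadDist_horizontalLine (hpos n), fun φ hφ e he hconv => ?_⟩
  have hlim : e = fun x y : upperHalfPlane => roadDist (horizontalLine 0) x y := by
    funext x y
    refine tendsto_nhds_unique (hconv.tendsto_apply x y) ?_
    exact ((((lipschitzWith_roadDist_horizontalLine x y).continuous.tendsto 0).comp
      tendsto_one_div_add_atTop_nhds_zero_nat).comp hφ.tendsto_atTop)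
  exact not_isLengthDist_roadDist_zero (hlim ▸ he.2.1)
end
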